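/- arXiv:1702.05868 — 3 statements merged into one kernel-verified Lean document; each statement's English description precedes it below -/
import Mathlib

section
/- The operation ⊙ on ℝ^{k+2} defined by (x,u_k,…,u_0) ⊙ (y,v_k,…,v_0) = (x+y, w_k, …, w_0), where w_k = u_k+v_k and w_s = u_s + v_s + Σ_{j=s+1}^k u_j y^{j-s}/(j-s)! for 0 ≤ s ≤ k−1, is associative with identity element 0. -/
/-- Points of `J^k(ℝ)` are `(x, u)` with `u s` the coordinate `u_s`, `s = 0, …, k`.
The group law of `J^k(ℝ)` in coordinates of the second kind. -/
noncomputable def jetMul (k : ℕ) (p q : ℝ × (Fin (k+1) → ℝ)) : ℝ × (Fin (k+1) → ℝ) :=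
  (p.1 + q.1, fun s => p.2 s + q.2 s +
    ∑ j : Fin (k+1), if (s : ℕ) < (j : ℕ) then
      p.2 j * q.1 ^ ((j : ℕ) - (s : ℕ)) / (Nat.factorial ((j : ℕ) - (s : ℕ)) : ℝ) else 0)

/-- The claimed inverse formula: `((x,u)⁻¹)_s = -∑_{j=s}^k ((-x)^{j-s}/(j-s)!) u_j`. -/
noncomputable def jetInv (k : ℕ) (p : ℝ × (Fin (k+1) → ℝ)) : ℝ × (Fin (k+1) → ℝ) :=
  (-p.1, fun s => -∑ j : Fin (k+1), if (s : ℕ) ≤ (j : ℕ) then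
    (-p.1) ^ ((j : ℕ) - (s : ℕ)) / (Nat.factorial ((j : ℕ) - (s : ℕ)) : ℝ) * p.2 j else 0)

lemma jet_binom_div (y z : ℝ) (n : ℕ) :
    ∑ m ∈ Finset.range (n+1), y ^ m * z ^ (n - m) / (Nat.factorial m * Nat.factorial (n-m) : ℝ)
      = (y+z)^n / n.factorial := by
  rw [add_pow, Finset.sum_div]
  refine Finset.sum_congr rfl fun m hm => ?_
  have hm' : m ≤ n := Nat.lt_succ_iff.mp (Finset.mem_range.mp hm)
  have h := Nat.choose_mul_factorial_mul_factorial hm'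
  have h1 : (m.factorial : ℝ) ≠ 0 := Nat.cast_ne_zero.mpr m.factorial_ne_zero
  have h2 : ((n-m).factorial : ℝ) ≠ 0 := Nat.cast_ne_zero.mpr (n-m).factorial_ne_zero
  have h3 : (n.factorial : ℝ) ≠ 0 := Nat.cast_ne_zero.mpr n.factorial_ne_zero
  have h' : ((n.choose m : ℝ)) * m.factorial * (n-m).factorial = n.factorial := by
    exact_mod_cast congrArg (Nat.cast : ℕ → ℝ) h
  field_simp
  linear_combination (-(y ^ m * z ^ (n - m))) * h'

lemma jet_inner_sum (y z : ℝ) (k : ℕ) (s i : Fin (k+1)) (hsi : (s:ℕ) < (i:ℕ)) :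
    ∑ j : Fin (k+1), (if (s:ℕ) < (j:ℕ) ∧ (j:ℕ) < (i:ℕ) then
        y ^ ((i:ℕ) - (j:ℕ)) * z ^ ((j:ℕ) - (s:ℕ)) /
          (Nat.factorial ((i:ℕ)-(j:ℕ)) * Nat.factorial ((j:ℕ)-(s:ℕ)) : ℝ) else 0)
      = (y+z) ^ ((i:ℕ)-(s:ℕ)) / Nat.factorial ((i:ℕ)-(s:ℕ))
        - y ^ ((i:ℕ)-(s:ℕ)) / Nat.factorial ((i:ℕ)-(s:ℕ))
        - z ^ ((i:ℕ)-(s:ℕ)) / Nat.factorial ((i:ℕ)-(s:ℕ)) := by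
  set n : ℕ := (i:ℕ) - (s:ℕ) with hn
  have hn1 : 1 ≤ n := by omega
  have step1 : ∑ j : Fin (k+1), (if (s:ℕ) < (j:ℕ) ∧ (j:ℕ) < (i:ℕ) then
        y ^ ((i:ℕ) - (j:ℕ)) * z ^ ((j:ℕ) - (s:ℕ)) /
          (Nat.factorial ((i:ℕ)-(j:ℕ)) * Nat.factorial ((j:ℕ)-(s:ℕ)) : ℝ) else 0)
      = ∑ j ∈ Finset.range (k+1), (if (s:ℕ) < j ∧ j < (i:ℕ) then
        y ^ ((i:ℕ) - j) * z ^ (j - (s:ℕ)) /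
          (Nat.factorial ((i:ℕ)-j) * Nat.factorial (j-(s:ℕ)) : ℝ) else 0) :=
    Fin.sum_univ_eq_sum_range (fun j => if (s:ℕ) < j ∧ j < (i:ℕ) then
        y ^ ((i:ℕ) - j) * z ^ (j - (s:ℕ)) /
          (Nat.factorial ((i:ℕ)-j) * Nat.factorial (j-(s:ℕ)) : ℝ) else 0) (k+1)
  rw [step1, ← Finset.sum_filter]
  have hfil : (Finset.range (k+1)).filter (fun j => (s:ℕ) < j ∧ j < (i:ℕ))
      = Finset.Ico ((s:ℕ)+1) (i:ℕ) := by
    ext j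
    simp only [Finset.mem_filter, Finset.mem_range, Finset.mem_Ico]
    have := i.isLt
    omega
  rw [hfil, Finset.sum_Ico_eq_sum_range]
  have hlen : (i:ℕ) - ((s:ℕ)+1) = n - 1 := by omega
  rw [hlen]
  have step2 : ∑ m ∈ Finset.range (n-1),
        y ^ ((i:ℕ) - ((s:ℕ)+1+m)) * z ^ (((s:ℕ)+1+m) - (s:ℕ)) /
          (Nat.factorial ((i:ℕ)-((s:ℕ)+1+m)) * Nat.factorial (((s:ℕ)+1+m)-(s:ℕ)) : ℝ)
      = ∑ m ∈ Finset.range (n-1),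
        z ^ (m+1) * y ^ (n - (m+1)) / (Nat.factorial (m+1) * Nat.factorial (n-(m+1)) : ℝ) := by
    refine Finset.sum_congr rfl fun m hm => ?_
    have hm' : m < n - 1 := Finset.mem_range.mp hm
    have e1 : (i:ℕ) - ((s:ℕ)+1+m) = n - (m+1) := by omega
    have e2 : ((s:ℕ)+1+m) - (s:ℕ) = m + 1 := by omega
    rw [e1, e2]; ring
  rw [step2]
  have hb := jet_binom_div z y n
  have hsplit : ∑ m ∈ Finset.range (n+1),
      z ^ m * y ^ (n - m) / (Nat.factorial m * Nat.factorial (n-m) : ℝ)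
      = (∑ m ∈ Finset.range (n-1),
          z ^ (m+1) * y ^ (n-(m+1)) / (Nat.factorial (m+1) * Nat.factorial (n-(m+1)) : ℝ))
        + z ^ 0 * y ^ (n-0) / (Nat.factorial 0 * Nat.factorial (n-0) : ℝ)
        + z ^ n * y ^ (n-n) / (Nat.factorial n * Nat.factorial (n-n) : ℝ) := by
    have h1 : n + 1 = (n - 1 + 1) + 1 := by omega
    rw [h1, Finset.sum_range_succ, Finset.sum_range_succ']
    have h2 : n - 1 + 1 = n := by omega
    rw [h2]
  rw [eq_sub_iff_add_eq, eq_sub_iff_add_eq, add_comm y z, ← hb, hsplit]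
  simp only [Nat.sub_self, Nat.factorial_zero, pow_zero, Nat.sub_zero, Nat.factorial]
  push_cast
  ring

lemma jet_core (k : ℕ) (u : Fin (k+1) → ℝ) (y z : ℝ) (s : Fin (k+1)) :
    (∑ j : Fin (k+1), if (s:ℕ) < (j:ℕ) then
        (∑ i : Fin (k+1), if (j:ℕ) < (i:ℕ) then
            u i * y ^ ((i:ℕ)-(j:ℕ)) / (Nat.factorial ((i:ℕ)-(j:ℕ)) : ℝ) else 0)
          * z ^ ((j:ℕ)-(s:ℕ)) / (Nat.factorial ((j:ℕ)-(s:ℕ)) : ℝ) else 0)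
    = ∑ j : Fin (k+1), (if (s:ℕ) < (j:ℕ) then
        u j * (y+z) ^ ((j:ℕ)-(s:ℕ)) / (Nat.factorial ((j:ℕ)-(s:ℕ)) : ℝ)
        - u j * y ^ ((j:ℕ)-(s:ℕ)) / (Nat.factorial ((j:ℕ)-(s:ℕ)) : ℝ)
        - u j * z ^ ((j:ℕ)-(s:ℕ)) / (Nat.factorial ((j:ℕ)-(s:ℕ)) : ℝ) else 0) := by
  have lhs_eq : (∑ j : Fin (k+1), if (s:ℕ) < (j:ℕ) then
        (∑ i : Fin (k+1), if (j:ℕ) < (i:ℕ) then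
            u i * y ^ ((i:ℕ)-(j:ℕ)) / (Nat.factorial ((i:ℕ)-(j:ℕ)) : ℝ) else 0)
          * z ^ ((j:ℕ)-(s:ℕ)) / (Nat.factorial ((j:ℕ)-(s:ℕ)) : ℝ) else 0)
      = ∑ j : Fin (k+1), ∑ i : Fin (k+1),
          if (s:ℕ) < (j:ℕ) ∧ (j:ℕ) < (i:ℕ) then
            u i * (y ^ ((i:ℕ)-(j:ℕ)) * z ^ ((j:ℕ)-(s:ℕ)) /
              (Nat.factorial ((i:ℕ)-(j:ℕ)) * Nat.factorial ((j:ℕ)-(s:ℕ)) : ℝ)) else 0 := by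
    refine Finset.sum_congr rfl fun j _ => ?_
    split_ifs with h
    · rw [Finset.sum_mul, Finset.sum_div]
      refine Finset.sum_congr rfl fun i _ => ?_
      by_cases h2 : (j:ℕ) < (i:ℕ)
      · rw [if_pos h2, if_pos ⟨h, h2⟩]
        field_simp
      · rw [if_neg h2, if_neg (fun hc => h2 hc.2), zero_mul, zero_div]
    · simp [h]
  rw [lhs_eq, Finset.sum_comm]
  refine Finset.sum_congr rfl fun i _ => ?_
  by_cases hi : (s:ℕ) < (i:ℕ)
  · rw [if_pos hi]
    have : ∑ j : Fin (k+1), (if (s:ℕ) < (j:ℕ) ∧ (j:ℕ) < (i:ℕ) then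
            u i * (y ^ ((i:ℕ)-(j:ℕ)) * z ^ ((j:ℕ)-(s:ℕ)) /
              (Nat.factorial ((i:ℕ)-(j:ℕ)) * Nat.factorial ((j:ℕ)-(s:ℕ)) : ℝ)) else 0)
        = u i * ∑ j : Fin (k+1), (if (s:ℕ) < (j:ℕ) ∧ (j:ℕ) < (i:ℕ) then
            y ^ ((i:ℕ)-(j:ℕ)) * z ^ ((j:ℕ)-(s:ℕ)) /
              (Nat.factorial ((i:ℕ)-(j:ℕ)) * Nat.factorial ((j:ℕ)-(s:ℕ)) : ℝ) else 0) := by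
      rw [Finset.mul_sum]
      refine Finset.sum_congr rfl fun j _ => ?_
      split_ifs <;> simp
    rw [this, jet_inner_sum y z k s i hi]
    ring
  · rw [if_neg hi]
    refine Finset.sum_eq_zero fun j _ => ?_
    have : ¬((s:ℕ) < (j:ℕ) ∧ (j:ℕ) < (i:ℕ)) := by omega
    rw [if_neg this]

/-- The jet-space operation `⊙` on `ℝ^{k+2}` is associative with identity `0`. -/
theorem stmt3 (k : ℕ) :
    (∀ p q w : ℝ × (Fin (k+1) → ℝ), jetMul k (jetMul k p q) w = jetMul k p (jetMul k q w)) ∧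
    (∀ p : ℝ × (Fin (k+1) → ℝ), jetMul k ((0 : ℝ), (0 : Fin (k+1) → ℝ)) p = p) ∧
    (∀ p : ℝ × (Fin (k+1) → ℝ), jetMul k p ((0 : ℝ), (0 : Fin (k+1) → ℝ)) = p) := by
  refine ⟨?_, ?_, ?_⟩
  · rintro ⟨x, u⟩ ⟨y, v⟩ ⟨z, t⟩
    simp only [jetMul, Prod.mk.injEq]
    refine ⟨add_assoc x y z, funext fun s => ?_⟩
    have hsplit : (∑ j : Fin (k+1), if (s:ℕ) < (j:ℕ) then
          (u j + v j + ∑ i : Fin (k+1), if (j:ℕ) < (i:ℕ) then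
              u i * y ^ ((i:ℕ)-(j:ℕ)) / (Nat.factorial ((i:ℕ)-(j:ℕ)) : ℝ) else 0)
            * z ^ ((j:ℕ)-(s:ℕ)) / (Nat.factorial ((j:ℕ)-(s:ℕ)) : ℝ) else 0)
        = (∑ j : Fin (k+1), if (s:ℕ) < (j:ℕ) then
            u j * z ^ ((j:ℕ)-(s:ℕ)) / (Nat.factorial ((j:ℕ)-(s:ℕ)) : ℝ) else 0)
        + (∑ j : Fin (k+1), if (s:ℕ) < (j:ℕ) then
            v j * z ^ ((j:ℕ)-(s:ℕ)) / (Nat.factorial ((j:ℕ)-(s:ℕ)) : ℝ) else 0)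
        + (∑ j : Fin (k+1), if (s:ℕ) < (j:ℕ) then
            (∑ i : Fin (k+1), if (j:ℕ) < (i:ℕ) then
                u i * y ^ ((i:ℕ)-(j:ℕ)) / (Nat.factorial ((i:ℕ)-(j:ℕ)) : ℝ) else 0)
              * z ^ ((j:ℕ)-(s:ℕ)) / (Nat.factorial ((j:ℕ)-(s:ℕ)) : ℝ) else 0) := by
      rw [← Finset.sum_add_distrib, ← Finset.sum_add_distrib]
      refine Finset.sum_congr rfl fun j _ => ?_
      split_ifs with h
      · ring
      · simp
    have hsub : (∑ j : Fin (k+1), (if (s:ℕ) < (j:ℕ) then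
          u j * (y+z) ^ ((j:ℕ)-(s:ℕ)) / (Nat.factorial ((j:ℕ)-(s:ℕ)) : ℝ)
          - u j * y ^ ((j:ℕ)-(s:ℕ)) / (Nat.factorial ((j:ℕ)-(s:ℕ)) : ℝ)
          - u j * z ^ ((j:ℕ)-(s:ℕ)) / (Nat.factorial ((j:ℕ)-(s:ℕ)) : ℝ) else 0))
        = (∑ j : Fin (k+1), if (s:ℕ) < (j:ℕ) then
            u j * (y+z) ^ ((j:ℕ)-(s:ℕ)) / (Nat.factorial ((j:ℕ)-(s:ℕ)) : ℝ) else 0)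
        - (∑ j : Fin (k+1), if (s:ℕ) < (j:ℕ) then
            u j * y ^ ((j:ℕ)-(s:ℕ)) / (Nat.factorial ((j:ℕ)-(s:ℕ)) : ℝ) else 0)
        - (∑ j : Fin (k+1), if (s:ℕ) < (j:ℕ) then
            u j * z ^ ((j:ℕ)-(s:ℕ)) / (Nat.factorial ((j:ℕ)-(s:ℕ)) : ℝ) else 0) := by
      rw [← Finset.sum_sub_distrib, ← Finset.sum_sub_distrib]
      refine Finset.sum_congr rfl fun j _ => ?_
      split_ifs with h
      · rfl
      · simp
    have hcore := jet_core k u y z s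
    rw [hsplit, hcore, hsub]
    ring
  · intro p
    simp only [jetMul, Pi.zero_apply, zero_mul, zero_div, ite_self, Finset.sum_const_zero,
      zero_add, add_zero]
  · intro p
    obtain ⟨x, u⟩ := p
    simp only [jetMul, Prod.mk.injEq]
    refine ⟨add_zero x, funext fun s => ?_⟩
    have h0 : ∀ j : Fin (k+1), (if (s:ℕ) < (j:ℕ) then
        u j * (0:ℝ) ^ ((j:ℕ)-(s:ℕ)) / (Nat.factorial ((j:ℕ)-(s:ℕ)) : ℝ) else 0) = 0 := by
      intro j
      split_ifs with h
      · rw [zero_pow (by omega), mul_zero, zero_div]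
      · rfl
    rw [Finset.sum_eq_zero fun j _ => h0 j]
    simp
end

section
/- Let f = (f^x, f^{u_1}, f^{u_0}) : Ω → J^1(ℝ) (Ω ⊆ ℝ^n open) satisfy: there exist C > 0 and a homeomorphism β of [0,∞) such that |f^{u_0}(p) − f^{u_0}(q) − f^{u_1}(q)(f^x(p) − f^x(q))| ≤ C² β(|p−q|)² |p−q| for all p,q ∈ Ω. If f^x is differentiable at p_0 ∈ Ω, then f^{u_0} is differentiable at p_0 with d f^{u_0}_{p_0} = f^{u_1}(p_0) d f^x_{p_0}. -/
open scoped NNReal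

open Filter Asymptotics Topology

lemma homeo_nnreal_zero (β : ℝ≥0 ≃ₜ ℝ≥0) : β 0 = 0 := by
  by_contra h
  set a := β.symm 0 with ha_def
  set t := β.symm (β 0 + 1) with ht_def
  have hβa : β a = 0 := β.apply_symm_apply 0
  have hβt : β t = β 0 + 1 := β.apply_symm_apply _
  have ha : a ≠ 0 := fun h' => h (by rw [← h'] at hβa ⊢; exact hβa)
  have ht : t ≠ 0 := by
    intro h'
    rw [h'] at hβt
    simp at hβt
  rcases lt_trichotomy t a with hlt | heq | hgt
  · obtain ⟨s, hs, hβs⟩ := intermediate_value_Icc' hlt.le β.continuous.continuousOn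
      (a := t) (b := a) (by rw [hβa, hβt]; exact ⟨zero_le, le_self_add⟩)
    have hs0 : s = 0 := β.injective hβs
    exact ht (le_antisymm (hs0 ▸ hs.1) (zero_le))
  · rw [heq, hβa] at hβt; exact absurd hβt.symm (by simp)
  · obtain ⟨s, hs, hβs⟩ := intermediate_value_Icc hgt.le β.continuous.continuousOn
      (a := a) (b := t) (by rw [hβa, hβt]; exact ⟨zero_le, le_self_add⟩)
    have hs0 : s = 0 := β.injective hβs
    exact ha (le_antisymm (hs0 ▸ hs.1) (zero_le))

/-- Weak contactness for `J^1(ℝ) ≅ ℍ¹`: if `f = (f^x, f^{u_1}, f^{u_0}) : Ω → J^1(ℝ)`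
satisfies the `C^{0,½+}`/Ball-Box bound
`|f^{u_0}(p) − f^{u_0}(q) − f^{u_1}(q)(f^x(p) − f^x(q))| ≤ C² β(|p−q|)² |p−q|`
on the open set `Ω`, with `β` a homeomorphism of `[0,∞)`, and `f^x` is differentiable
at `p₀ ∈ Ω`, then `f^{u_0}` is differentiable at `p₀` with
`d f^{u_0}_{p₀} = f^{u_1}(p₀) d f^x_{p₀}`. -/
theorem stmt13 {n : ℕ} {Ω : Set (EuclideanSpace ℝ (Fin n))} (hΩ : IsOpen Ω)
    (fx fu1 fu0 : EuclideanSpace ℝ (Fin n) → ℝ)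
    (C : ℝ) (hC : 0 < C) (β : ℝ≥0 ≃ₜ ℝ≥0)
    (hbound : ∀ p ∈ Ω, ∀ q ∈ Ω,
      |fu0 p - fu0 q - fu1 q * (fx p - fx q)| ≤
        C ^ 2 * (β ⟨dist p q, dist_nonneg⟩ : ℝ) ^ 2 * dist p q)
    {p₀ : EuclideanSpace ℝ (Fin n)} (hp₀ : p₀ ∈ Ω)
    {Dx : EuclideanSpace ℝ (Fin n) →L[ℝ] ℝ} (hdiff : HasFDerivAt fx Dx p₀) :
    HasFDerivAt fu0 (fu1 p₀ • Dx) p₀ := by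
  have hβ0 : β 0 = 0 := homeo_nnreal_zero β
  rw [hasFDerivAt_iff_isLittleO_nhds_zero] at hdiff ⊢
  -- coefficient tends to 0
  have htend : Filter.Tendsto
      (fun h : EuclideanSpace ℝ (Fin n) =>
        C ^ 2 * (β ⟨dist (p₀ + h) p₀, dist_nonneg⟩ : ℝ) ^ 2) (𝓝 0) (𝓝 0) := by
    have h1 : Filter.Tendsto
        (fun h : EuclideanSpace ℝ (Fin n) => (⟨dist (p₀ + h) p₀, dist_nonneg⟩ : ℝ≥0))
        (𝓝 0) (𝓝 0) := by
      apply NNReal.tendsto_coe.mp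
      show Tendsto (fun h : EuclideanSpace ℝ (Fin n) => dist (p₀ + h) p₀) (𝓝 0) (𝓝 0)
      have hcont : Continuous (fun h : EuclideanSpace ℝ (Fin n) => dist (p₀ + h) p₀) :=
        (continuous_const.add continuous_id).dist continuous_const
      simpa using hcont.tendsto 0
    have h2 := (β.continuous.tendsto 0).comp h1
    rw [hβ0] at h2
    have h3 := (NNReal.tendsto_coe.mpr h2)
    have := ((h3.pow 2).const_mul (C ^ 2))
    have e : C ^ 2 * ((0 : ℝ≥0) : ℝ) ^ 2 = 0 := by simp
    rw [e] at this
    exact this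
  have h1 : (fun h : EuclideanSpace ℝ (Fin n) =>
      fu0 (p₀ + h) - fu0 p₀ - fu1 p₀ * (fx (p₀ + h) - fx p₀)) =o[𝓝 0] fun h => h := by
    rw [isLittleO_iff]
    intro c hc
    have hmem : ∀ᶠ h : EuclideanSpace ℝ (Fin n) in 𝓝 0, p₀ + h ∈ Ω := by
      have : Filter.Tendsto (fun h : EuclideanSpace ℝ (Fin n) => p₀ + h) (𝓝 0) (𝓝 p₀) := by
        simpa [Pi.add_def] using (continuous_const.add continuous_id).tendsto (0 : EuclideanSpace ℝ (Fin n))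
      exact this.eventually (hΩ.mem_nhds hp₀)
    filter_upwards [hmem, htend.eventually_le_const hc] with h hΩh hsmall
    calc ‖fu0 (p₀ + h) - fu0 p₀ - fu1 p₀ * (fx (p₀ + h) - fx p₀)‖
        ≤ C ^ 2 * (β ⟨dist (p₀ + h) p₀, dist_nonneg⟩ : ℝ) ^ 2 * dist (p₀ + h) p₀ :=
          hbound _ hΩh _ hp₀
      _ ≤ c * dist (p₀ + h) p₀ :=
          mul_le_mul_of_nonneg_right hsmall dist_nonneg
      _ = c * ‖h‖ := by rw [dist_eq_norm]; simp
  have h2 : (fun h : EuclideanSpace ℝ (Fin n) =>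
      fu1 p₀ * (fx (p₀ + h) - fx p₀ - Dx h)) =o[𝓝 0] fun h => h :=
    hdiff.const_mul_left _
  have := h1.add h2
  convert this using 2 with h
  · rfl
  · rfl
  simp only [ContinuousLinearMap.smul_apply, smul_eq_mul]
  ring
end

section
/- Let Ω ⊆ ℝ^k be open and let f = (f^A, f^B) : Ω → ℝ^r × ℝ^s. Fix antisymmetric structural constants α_k^{ij} and suppose there is a homeomorphism β : [0,∞) → [0,∞) such that for a fixed x₀ ∈ Ω and all x ∈ Ω, |f^{B_k}(x) − f^{B_k}(x₀) − ½ Σ_{i<j} α_k^{ij}(f^{A_i}(x₀) f^{A_j}(x) − f^{A_i}(x) f^{A_j}(x₀))| ≤ β(|x−x₀|)² |x−x₀|. If each f^{A_i} is differentiable at x₀, then f^{B_k} is differentiable at x₀ with d f^{B_k}_{x₀} = ½ Σ_{i=1}^r (Σ_{j<i} α_k^{ji} f^{A_j}(x₀) − Σ_{j>i} α_k^{ij} f^{A_j}(x₀)) d f^{A_i}_{x₀}. -/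
open scoped NNReal

/-- The core of weak contactness for step-two Carnot groups: if the horizontal
components `f^{A_i}` are differentiable at `x₀ ∈ Ω` and the vertical component
`f^{B_K}` satisfies the `C^{0,½+}`/Ball-Box bound
`|f^{B_K}(x) − f^{B_K}(x₀) − ½∑_{i<j} α_K^{ij}(f^{A_i}(x₀) f^{A_j}(x) − f^{A_i}(x) f^{A_j}(x₀))|
  ≤ β(|x−x₀|)² |x−x₀|`
with `β` a homeomorphism of `[0,∞)`, then `f^{B_K}` is differentiable at `x₀` with
`d f^{B_K}_{x₀} = ½ ∑_i (∑_{j<i} α_K^{ji} f^{A_j}(x₀) − ∑_{j>i} α_K^{ij} f^{A_j}(x₀)) d f^{A_i}_{x₀}`. -/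
theorem stmt19 {n r s : ℕ} {Ω : Set (EuclideanSpace ℝ (Fin n))} (hΩ : IsOpen Ω)
    (fA : Fin r → EuclideanSpace ℝ (Fin n) → ℝ)
    (fB : Fin s → EuclideanSpace ℝ (Fin n) → ℝ)
    (α : Fin s → Fin r → Fin r → ℝ)
    (hanti : ∀ (k : Fin s) (i j : Fin r), α k j i = - α k i j)
    (β : ℝ≥0 ≃ₜ ℝ≥0) {x₀ : EuclideanSpace ℝ (Fin n)} (hx₀ : x₀ ∈ Ω) (K : Fin s)
    (hbound : ∀ x ∈ Ω,
      |fB K x - fB K x₀ - (1/2) * ∑ i : Fin r, ∑ j : Fin r,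
          (if (i : ℕ) < (j : ℕ) then
            α K i j * (fA i x₀ * fA j x - fA i x * fA j x₀) else 0)| ≤
        (β ⟨‖x - x₀‖, norm_nonneg _⟩ : ℝ) ^ 2 * ‖x - x₀‖)
    (DA : Fin r → (EuclideanSpace ℝ (Fin n) →L[ℝ] ℝ))
    (hDA : ∀ i : Fin r, HasFDerivAt (fA i) (DA i) x₀) :
    HasFDerivAt (fB K)
      (((1:ℝ)/2) • ∑ i : Fin r,
        ((∑ j : Fin r, if (j : ℕ) < (i : ℕ) then α K j i * fA j x₀ else 0) -
         (∑ j : Fin r, if (i : ℕ) < (j : ℕ) then α K i j * fA j x₀ else 0)) • DA i)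
      x₀ := by
  classical
  have hβ0 : β 0 = 0 := by
    rcases β.continuous.strictMono_of_inj β.injective with h | h
    · have h1 : β 0 ≤ β (β.symm 0) := h.monotone zero_le
      rw [β.apply_symm_apply] at h1
      exact le_antisymm h1 zero_le
    · exfalso
      have h1 : β (β.symm (β 0 + 1)) ≤ β 0 := h.antitone zero_le
      rw [β.apply_symm_apply] at h1
      simp at h1
  set g : EuclideanSpace ℝ (Fin n) → ℝ := fun x =>
    (1/2) * ∑ i : Fin r, ∑ j : Fin r,
      (if (i : ℕ) < (j : ℕ) then α K i j * (fA i x₀ * fA j x - fA i x * fA j x₀) else 0)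
    with hgdef
  set D : EuclideanSpace ℝ (Fin n) →L[ℝ] ℝ := ((1:ℝ)/2) • ∑ i : Fin r,
        ((∑ j : Fin r, if (j : ℕ) < (i : ℕ) then α K j i * fA j x₀ else 0) -
         (∑ j : Fin r, if (i : ℕ) < (j : ℕ) then α K i j * fA j x₀ else 0)) • DA i with hDdef
  -- derivative of g
  have h1 : HasFDerivAt (fun x => ∑ i : Fin r, ∑ j : Fin r,
      (if (i : ℕ) < (j : ℕ) then α K i j * (fA i x₀ * fA j x - fA i x * fA j x₀) else 0))
      (∑ i : Fin r, ∑ j : Fin r, (if (i : ℕ) < (j : ℕ) then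
        α K i j • ((fA i x₀) • DA j - (fA j x₀) • DA i) else 0)) x₀ := by
    apply HasFDerivAt.fun_sum; intro i _
    apply HasFDerivAt.fun_sum; intro j _
    by_cases hij : (i : ℕ) < (j : ℕ)
    · simp only [hij, if_true]
      exact (((hDA j).const_mul (fA i x₀)).sub ((hDA i).mul_const (fA j x₀))).const_mul _
    · simp only [hij, if_false]
      exact hasFDerivAt_const 0 x₀
  have hsplit : ∀ (p : Prop) [Decidable p] (a b : ℝ),
      (if p then a - b else 0) = (if p then a else 0) - (if p then b else 0) := by
    intros p _ a b; split <;> simp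
  have hsum : (∑ i : Fin r, ∑ j : Fin r, (if (i : ℕ) < (j : ℕ) then
        α K i j • ((fA i x₀) • DA j - (fA j x₀) • DA i) else 0)) =
      ∑ i : Fin r,
        ((∑ j : Fin r, if (j : ℕ) < (i : ℕ) then α K j i * fA j x₀ else 0) -
         (∑ j : Fin r, if (i : ℕ) < (j : ℕ) then α K i j * fA j x₀ else 0)) • DA i := by
    ext v
    simp only [ContinuousLinearMap.sum_apply, ContinuousLinearMap.smul_apply,
      ContinuousLinearMap.sub_apply, ContinuousLinearMap.zero_apply,
      apply_ite (fun (L : EuclideanSpace ℝ (Fin n) →L[ℝ] ℝ) => L v), smul_eq_mul,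
      mul_sub, sub_mul, Finset.sum_mul, ite_mul, zero_mul]
    simp only [hsplit, Finset.sum_sub_distrib]
    congr 1
    · rw [Finset.sum_comm]
      apply Finset.sum_congr rfl; intro i _
      apply Finset.sum_congr rfl; intro j _
      by_cases hji : (j : ℕ) < (i : ℕ) <;> simp [hji, mul_assoc]
    · apply Finset.sum_congr rfl; intro i _
      apply Finset.sum_congr rfl; intro j _
      by_cases hij : (i : ℕ) < (j : ℕ) <;> simp [hij, mul_assoc]
  have hg : HasFDerivAt g D x₀ := by
    rw [hDdef, ← hsum]
    exact h1.const_mul _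
  have hgx₀ : g x₀ = 0 := by
    simp [hgdef]
  have h2 : (fun x => fB K x - fB K x₀ - g x) =o[nhds x₀] (fun x => x - x₀) := by
    rw [Asymptotics.isLittleO_iff]
    intro ε hε
    have hmem : Ω ∈ nhds x₀ := hΩ.mem_nhds hx₀
    have hcont : Filter.Tendsto
        (fun x : EuclideanSpace ℝ (Fin n) => ((β ⟨‖x - x₀‖, norm_nonneg _⟩ : ℝ≥0) : ℝ) ^ 2)
        (nhds x₀) (nhds 0) := by
      have ht : Filter.Tendsto (fun x : EuclideanSpace ℝ (Fin n) =>
          (⟨‖x - x₀‖, norm_nonneg _⟩ : ℝ≥0)) (nhds x₀) (nhds 0) := by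
        have h3 : Filter.Tendsto (fun x : EuclideanSpace ℝ (Fin n) => ‖x - x₀‖₊)
            (nhds x₀) (nhds ‖x₀ - x₀‖₊) :=
          ((continuous_id.sub continuous_const).nnnorm).tendsto x₀
        simp only [sub_self, nnnorm_zero] at h3
        refine h3.congr (fun x => ?_)
        ext; simp
      have h4 := ((β.continuous.tendsto 0).comp ht)
      rw [hβ0] at h4
      have h5 := ((NNReal.continuous_coe.tendsto 0).comp h4)
      convert h5.pow 2 using 1
      · rfl
      · simp
    filter_upwards [hmem, hcont.eventually_le_const hε] with x hxΩ hxβ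
    have hb := hbound x hxΩ
    rw [Real.norm_eq_abs]
    calc |fB K x - fB K x₀ - g x| ≤ (β ⟨‖x - x₀‖, norm_nonneg _⟩ : ℝ) ^ 2 * ‖x - x₀‖ := hb
      _ ≤ ε * ‖x - x₀‖ := mul_le_mul_of_nonneg_right hxβ (norm_nonneg _)
  refine HasFDerivAt.of_isLittleO ?_
  have h3 := hg.isLittleO
  have h6 := h2.add h3
  apply h6.congr' _ (by rfl)
  filter_upwards with x
  rw [hgx₀]
  ring
end
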